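/- For nonnegative integers x_1, x_2, x_3 and even n ≥ 4, with u = (n−4)/2, the integral ∫_{Δ_1>0}∫_{Δ_2>0}∫_{Δ_3>0} Δ_1^{x_1} Δ_2^{x_2} Δ_3^{x_3} · Δ_3^u (Δ_2+Δ_3)^u (Δ_1+Δ_2+Δ_3)^u · Δ_1 Δ_2 (Δ_1+Δ_2) · exp(−(Δ_1 + 2Δ_2 + 3Δ_3)/2) dΔ_1 dΔ_2 dΔ_3 equals Σ_{i=0}^{u} Σ_{j=0}^{1} Σ_{s=0}^{u} Σ_{t=0}^{u−s} (u choose i)(u choose s)(u−s choose t) · 2^{3u − i + j − t + x_1 + x_3 + 3} · 3^{−3u + i + s + t − x_3 − 1} · (j+s+x_1+1)! · (i−j+t+2+x_2)! · (3u−i−s−t+x_3)!. -/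
import Mathlib
open MeasureTheory Set Real Filter Asymptotics Finset

lemma aux_integrable (k : ℕ) {a : ℝ} (ha : 0 < a) :
    IntegrableOn (fun x : ℝ => x ^ k * Real.exp (-(a * x))) (Set.Ioi 0) := by
  refine integrable_of_isBigO_exp_neg (half_pos ha) ?_ ?_
  · exact ((continuous_pow k).mul (Real.continuous_exp.comp
      ((continuous_const.mul continuous_id).neg))).continuousOn
  · have h := tendsto_rpow_mul_exp_neg_mul_atTop_nhds_zero k (a/2) (half_pos ha)
    have h1 : (fun x : ℝ => x ^ (k:ℝ) * Real.exp (-(a/2) * x)) =O[atTop] (fun _ => (1:ℝ)) :=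
      h.isBigO_one ℝ
    have h2 := (h1.mul (isBigO_refl (fun x : ℝ => Real.exp (-(a/2) * x)) atTop))
    have heq : (fun x : ℝ => x ^ k * Real.exp (-(a * x)))
        = fun x => (x ^ (k:ℝ) * Real.exp (-(a/2) * x)) * Real.exp (-(a/2) * x) := by
      funext x
      rw [Real.rpow_natCast, mul_assoc, ← Real.exp_add]
      ring_nf
    rw [heq]
    simpa using h2

lemma aux_integral (k : ℕ) {a : ℝ} (ha : 0 < a) :
    ∫ x in Set.Ioi (0:ℝ), x ^ k * Real.exp (-(a * x)) = (k.factorial : ℝ) / a ^ (k+1) := by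
  have h := Real.integral_rpow_mul_exp_neg_mul_Ioi (show (0:ℝ) < (k:ℝ)+1 by positivity) ha
  rw [add_sub_cancel_right] at h
  simp_rw [Real.rpow_natCast] at h
  rw [Real.Gamma_nat_eq_factorial,
    show ((k:ℝ)+1) = ((k+1 : ℕ) : ℝ) by push_cast; ring, Real.rpow_natCast] at h
  rw [h, one_div, inv_pow]
  field_simp


/-- index: p = ((i,j),(s,t)) -/
noncomputable def Q1x (u x1 : ℕ) (p : (ℕ × ℕ) × ℕ × ℕ) (y : ℝ) : ℝ :=
  ((u.choose p.1.1 : ℝ) * (u.choose p.2.1 : ℝ) * ((u - p.2.1).choose p.2.2 : ℝ)) *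
    (y ^ (x1 + p.2.1 + p.1.2 + 1) * Real.exp (-(2⁻¹ * y)))

noncomputable def Q2x (x2 : ℕ) (p : (ℕ × ℕ) × ℕ × ℕ) (y : ℝ) : ℝ :=
  y ^ (x2 + p.1.1 + p.2.2 + (1 - p.1.2) + 1) * Real.exp (-(1 * y))

noncomputable def Q3x (u x3 : ℕ) (p : (ℕ × ℕ) × ℕ × ℕ) (y : ℝ) : ℝ :=
  y ^ (x3 + u + (u - p.1.1) + (u - p.2.1 - p.2.2)) * Real.exp (-(3/2 * y))

def Ax (u : ℕ) : Finset ((ℕ × ℕ) × ℕ × ℕ) :=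
  (Finset.range (u+1) ×ˢ Finset.range 2) ×ˢ (Finset.range (u+1) ×ˢ Finset.range (u+1))

lemma key17 (u x1 x2 x3 : ℕ) (y1 y2 y3 : ℝ) :
    y1 ^ x1 * y2 ^ x2 * y3 ^ x3 * (y3 ^ u * (y2 + y3) ^ u * (y1 + y2 + y3) ^ u) *
      (y1 * y2 * (y1 + y2)) * Real.exp (-(y1 + 2 * y2 + 3 * y3) / 2)
    = ∑ p ∈ Ax u, Q1x u x1 p y1 * (Q2x x2 p y2 * Q3x u x3 p y3) := by
  have hexp : Real.exp (-(y1 + 2 * y2 + 3 * y3) / 2)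
      = Real.exp (-(2⁻¹ * y1)) * Real.exp (-(1 * y2)) * Real.exp (-(3/2 * y3)) := by
    rw [← Real.exp_add, ← Real.exp_add]; congr 1; ring
  have hb2 : ∀ m, m ≤ u → (y2 + y3) ^ m
      = ∑ t ∈ Finset.range (u+1), y2 ^ t * y3 ^ (m - t) * (m.choose t : ℝ) := by
    intro m hm
    rw [add_pow]
    refine Finset.sum_subset (Finset.range_subset_range.mpr (by omega)) ?_
    intro t _ hnt
    rw [Finset.mem_range, not_lt] at hnt
    rw [Nat.choose_eq_zero_of_lt (by omega)]
    simp
  have hb2' : ∀ s : ℕ, (y2 + y3) ^ (u - s)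
      = ∑ t ∈ Finset.range (u+1), y2 ^ t * y3 ^ (u - s - t) * ((u-s).choose t : ℝ) :=
    fun s => hb2 (u - s) (Nat.sub_le u s)
  have h3sum : (y1 + y2 + y3) ^ u
      = ∑ s ∈ Finset.range (u+1), y1 ^ s * (y2 + y3) ^ (u - s) * (u.choose s : ℝ) := by
    rw [show y1 + y2 + y3 = y1 + (y2 + y3) by ring, add_pow]
  have hj := add_pow y1 y2 1
  rw [pow_one] at hj
  rw [h3sum, hj, hb2 u le_rfl, hexp]
  simp only [hb2']
  rw [Ax]
  simp only [Finset.sum_product, Q1x, Q2x, Q3x]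
  simp only [Finset.sum_mul, Finset.mul_sum]
  conv_lhs =>
    enter [2, j, 2, s]
    rw [Finset.sum_comm]
  conv_lhs =>
    enter [2, j]
    rw [Finset.sum_comm]
  rw [Finset.sum_comm]
  refine Finset.sum_congr rfl fun i _ => Finset.sum_congr rfl fun j hj =>
    Finset.sum_congr rfl fun s _ => Finset.sum_congr rfl fun t _ => ?_
  fin_cases hj <;> · simp only [Nat.choose_self, Nat.choose_zero_right, Nat.cast_one]; push_cast; ring


section
variable (u x1 x2 x3 : ℕ)

lemma st3 (y1 y2 : ℝ) :
    (∫ y3 in Set.Ioi (0:ℝ), ∑ p ∈ Ax u, Q1x u x1 p y1 * (Q2x x2 p y2 * Q3x u x3 p y3))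
    = ∑ p ∈ Ax u, Q1x u x1 p y1 * (Q2x x2 p y2 *
        ((Nat.factorial (x3 + u + (u - p.1.1) + (u - p.2.1 - p.2.2)) : ℝ)
          / (3/2 : ℝ) ^ (x3 + u + (u - p.1.1) + (u - p.2.1 - p.2.2) + 1))) := by
  rw [integral_finset_sum]
  · refine Finset.sum_congr rfl fun p _ => ?_
    simp only [Q3x]
    rw [MeasureTheory.integral_const_mul, MeasureTheory.integral_const_mul,
      aux_integral _ (by norm_num : (0:ℝ) < 3/2)]
  · intro p _
    simp only [Q3x]
    exact ((aux_integrable _ (by norm_num : (0:ℝ) < 3/2)).const_mul _).const_mul _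

lemma st2 (y1 : ℝ) :
    (∫ y2 in Set.Ioi (0:ℝ), ∑ p ∈ Ax u, Q1x u x1 p y1 * (Q2x x2 p y2 *
        ((Nat.factorial (x3 + u + (u - p.1.1) + (u - p.2.1 - p.2.2)) : ℝ)
          / (3/2 : ℝ) ^ (x3 + u + (u - p.1.1) + (u - p.2.1 - p.2.2) + 1))))
    = ∑ p ∈ Ax u, Q1x u x1 p y1 *
        (((Nat.factorial (x2 + p.1.1 + p.2.2 + (1 - p.1.2) + 1) : ℝ)
            / (1:ℝ) ^ (x2 + p.1.1 + p.2.2 + (1 - p.1.2) + 1 + 1)) *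
          ((Nat.factorial (x3 + u + (u - p.1.1) + (u - p.2.1 - p.2.2)) : ℝ)
            / (3/2 : ℝ) ^ (x3 + u + (u - p.1.1) + (u - p.2.1 - p.2.2) + 1))) := by
  rw [integral_finset_sum]
  · refine Finset.sum_congr rfl fun p _ => ?_
    simp only [Q2x]
    rw [MeasureTheory.integral_const_mul, MeasureTheory.integral_mul_const,
      aux_integral _ (by norm_num : (0:ℝ) < 1)]
  · intro p _
    simp only [Q2x]
    exact (((aux_integrable _ (by norm_num : (0:ℝ) < 1)).mul_const _).const_mul _)

lemma st1 :
    (∫ y1 in Set.Ioi (0:ℝ), ∑ p ∈ Ax u, Q1x u x1 p y1 *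
        (((Nat.factorial (x2 + p.1.1 + p.2.2 + (1 - p.1.2) + 1) : ℝ)
            / (1:ℝ) ^ (x2 + p.1.1 + p.2.2 + (1 - p.1.2) + 1 + 1)) *
          ((Nat.factorial (x3 + u + (u - p.1.1) + (u - p.2.1 - p.2.2)) : ℝ)
            / (3/2 : ℝ) ^ (x3 + u + (u - p.1.1) + (u - p.2.1 - p.2.2) + 1))))
    = ∑ p ∈ Ax u,
        ((u.choose p.1.1 : ℝ) * (u.choose p.2.1 : ℝ) * ((u - p.2.1).choose p.2.2 : ℝ)) *
          ((Nat.factorial (x1 + p.2.1 + p.1.2 + 1) : ℝ)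
            / (2⁻¹ : ℝ) ^ (x1 + p.2.1 + p.1.2 + 1 + 1)) *
        (((Nat.factorial (x2 + p.1.1 + p.2.2 + (1 - p.1.2) + 1) : ℝ)
            / (1:ℝ) ^ (x2 + p.1.1 + p.2.2 + (1 - p.1.2) + 1 + 1)) *
          ((Nat.factorial (x3 + u + (u - p.1.1) + (u - p.2.1 - p.2.2)) : ℝ)
            / (3/2 : ℝ) ^ (x3 + u + (u - p.1.1) + (u - p.2.1 - p.2.2) + 1))) := by
  rw [integral_finset_sum]
  · refine Finset.sum_congr rfl fun p _ => ?_
    simp only [Q1x]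
    rw [MeasureTheory.integral_mul_const, MeasureTheory.integral_const_mul,
      aux_integral _ (by norm_num : (0:ℝ) < 2⁻¹), mul_assoc]
  · intro p _
    simp only [Q1x]
    exact (((aux_integrable _ (by norm_num : (0:ℝ) < 2⁻¹)).const_mul _).mul_const _)

end


lemma fin_arith (u x1 x2 x3 : ℕ) :
    (∑ p ∈ Ax u,
        ((u.choose p.1.1 : ℝ) * (u.choose p.2.1 : ℝ) * ((u - p.2.1).choose p.2.2 : ℝ)) *
          ((Nat.factorial (x1 + p.2.1 + p.1.2 + 1) : ℝ)
            / (2⁻¹ : ℝ) ^ (x1 + p.2.1 + p.1.2 + 1 + 1)) *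
        (((Nat.factorial (x2 + p.1.1 + p.2.2 + (1 - p.1.2) + 1) : ℝ)
            / (1:ℝ) ^ (x2 + p.1.1 + p.2.2 + (1 - p.1.2) + 1 + 1)) *
          ((Nat.factorial (x3 + u + (u - p.1.1) + (u - p.2.1 - p.2.2)) : ℝ)
            / (3/2 : ℝ) ^ (x3 + u + (u - p.1.1) + (u - p.2.1 - p.2.2) + 1))))
    = ∑ i ∈ Finset.range (u + 1), ∑ j ∈ Finset.range 2,
        ∑ s ∈ Finset.range (u + 1), ∑ t ∈ Finset.range (u - s + 1),
          (u.choose i : ℝ) * (u.choose s : ℝ) * ((u - s).choose t : ℝ) *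
            (2 : ℝ) ^ (3 * u + j + x1 + x3 + 3 - i - t) *
            (3 : ℝ) ^ ((i : ℤ) + (s : ℤ) + (t : ℤ) - 3 * (u : ℤ) - (x3 : ℤ) - 1) *
            (Nat.factorial (j + s + x1 + 1) : ℝ) *
            (Nat.factorial (i + t + 2 + x2 - j) : ℝ) *
            (Nat.factorial (3 * u + x3 - i - s - t) : ℝ) := by
  rw [Ax]
  simp only [Finset.sum_product]
  refine Finset.sum_congr rfl fun i hi => Finset.sum_congr rfl fun j hj =>
    Finset.sum_congr rfl fun s hs => ?_
  rw [Finset.mem_range] at hi hj hs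
  rw [← Finset.sum_subset (Finset.range_subset_range.mpr (by omega : u - s + 1 ≤ u + 1))
    (fun t _ hnt => by
      rw [Finset.mem_range, not_lt] at hnt
      rw [Nat.choose_eq_zero_of_lt (show u - s < t by omega)]
      simp)]
  refine Finset.sum_congr rfl fun t ht => ?_
  rw [Finset.mem_range] at ht
  have h1 : x1 + s + j + 1 = j + s + x1 + 1 := by omega
  have h2 : x2 + i + t + (1 - j) + 1 = i + t + 2 + x2 - j := by omega
  have h3 : x3 + u + (u - i) + (u - s - t) = 3 * u + x3 - i - s - t := by omega
  rw [h1, h2, h3, one_pow]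
  have hz : (3 : ℝ) ^ ((i : ℤ) + (s : ℤ) + (t : ℤ) - 3 * (u : ℤ) - (x3 : ℤ) - 1)
      = ((3 : ℝ) ^ (3 * u + x3 - i - s - t + 1))⁻¹ := by
    rw [show ((i : ℤ) + (s : ℤ) + (t : ℤ) - 3 * (u : ℤ) - (x3 : ℤ) - 1)
        = -((3 * u + x3 - i - s - t + 1 : ℕ) : ℤ) from by omega,
      zpow_neg, zpow_natCast]
  rw [hz, show 3 * u + j + x1 + x3 + 3 - i - t
      = (j + s + x1 + 1 + 1) + (3 * u + x3 - i - s - t + 1) from by omega, pow_add]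
  rw [div_pow, inv_pow]
  have p2 : ((2:ℝ) ^ (j + s + x1 + 1 + 1))⁻¹ ≠ 0 := by positivity
  field_simp
  ring


open MeasureTheory

/-- Explicit evaluation of the triple eigenvalue-gap integral appearing in the
analytic risk evaluation (case `p = 3`, `n ≥ 4` even, `u = (n-4)/2`). -/
theorem stmt_17 (n : ℕ) (hn : 4 ≤ n) (he : Even n) (u : ℕ) (hu : u = (n - 4) / 2)
    (x1 x2 x3 : ℕ) :
    (∫ Δ1 in Set.Ioi (0 : ℝ), ∫ Δ2 in Set.Ioi (0 : ℝ), ∫ Δ3 in Set.Ioi (0 : ℝ),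
        Δ1 ^ x1 * Δ2 ^ x2 * Δ3 ^ x3 *
          (Δ3 ^ u * (Δ2 + Δ3) ^ u * (Δ1 + Δ2 + Δ3) ^ u) *
          (Δ1 * Δ2 * (Δ1 + Δ2)) *
          Real.exp (-(Δ1 + 2 * Δ2 + 3 * Δ3) / 2)) =
      ∑ i ∈ Finset.range (u + 1), ∑ j ∈ Finset.range 2,
        ∑ s ∈ Finset.range (u + 1), ∑ t ∈ Finset.range (u - s + 1),
          (u.choose i : ℝ) * (u.choose s : ℝ) * ((u - s).choose t : ℝ) *
            (2 : ℝ) ^ (3 * u + j + x1 + x3 + 3 - i - t) *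
            (3 : ℝ) ^ ((i : ℤ) + (s : ℤ) + (t : ℤ) - 3 * (u : ℤ) - (x3 : ℤ) - 1) *
            (Nat.factorial (j + s + x1 + 1) : ℝ) *
            (Nat.factorial (i + t + 2 + x2 - j) : ℝ) *
            (Nat.factorial (3 * u + x3 - i - s - t) : ℝ) := by
  simp only [key17 u x1 x2 x3]
  simp only [st3 u x1 x2 x3]
  simp only [st2 u x1 x2 x3]
  rw [st1 u x1 x2 x3, fin_arith u x1 x2 x3]
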